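/- Let z ∈ ℂ with Im z ≠ 0, h = -∂² + 2/(x - z)², r₀ = ∂ + 1/(x - z), and r₀^t = -∂ + 1/(x - z). Then r₀^t r₀ = h and r₀ r₀^t = -∂² as differential operators on smooth functions on ℝ, and the operator e = -r₀^t ∂ r₀ commutes with h and satisfies -e² = h³. -/

import Mathlib

/-- The non-Hermitian Hamiltonian `h = -∂² + 2/(x - z)²`. -/
noncomputable def hSing (z : ℂ) (f : ℝ → ℂ) : ℝ → ℂ :=
  fun x => -(deriv (deriv f) x) + 2 / ((x : ℂ) - z) ^ 2 * f x

/-- `r₀ = ∂ + 1/(x - z)`. -/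
noncomputable def r0Sing (z : ℂ) (f : ℝ → ℂ) : ℝ → ℂ :=
  fun x => deriv f x + (1 / ((x : ℂ) - z)) * f x

/-- `r₀ᵗ = -∂ + 1/(x - z)`. -/
noncomputable def r0tSing (z : ℂ) (f : ℝ → ℂ) : ℝ → ℂ :=
  fun x => -deriv f x + (1 / ((x : ℂ) - z)) * f x

/-- The third-order symmetry operator `e = -r₀ᵗ ∂ r₀`. -/
noncomputable def eSing (z : ℂ) (f : ℝ → ℂ) : ℝ → ℂ :=
  fun x => -(r0tSing z (deriv (r0Sing z f)) x)

section Aux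

variable {z : ℂ}

lemma sub_ne (hz : z.im ≠ 0) (x : ℝ) : ((x:ℂ) - z) ≠ 0 := by
  intro h
  apply hz
  have := congrArg Complex.im h
  simp at this
  simpa using this

lemma hasDerivAt_sub (x : ℝ) : HasDerivAt (fun y : ℝ => ((y:ℂ) - z)) 1 x := by
  simpa using (Complex.ofRealCLM.hasDerivAt (x := x)).sub_const z

lemma hasDerivAt_u (hz : z.im ≠ 0) (x : ℝ) :
    HasDerivAt (fun y : ℝ => 1 / ((y:ℂ) - z)) (-(1 / ((x:ℂ) - z)) ^ 2) x := by
  have h := (hasDerivAt_inv (sub_ne hz x)).comp x (hasDerivAt_sub (z := z) x)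
  simp only [Function.comp_def] at h
  simpa [one_div, div_eq_mul_inv, inv_pow] using h

lemma u_smooth (hz : z.im ≠ 0) : ContDiff ℝ (⊤ : ℕ∞) (fun y : ℝ => 1 / ((y:ℂ) - z)) := by
  simp only [one_div]
  exact (Complex.ofRealCLM.contDiff.sub contDiff_const).inv (sub_ne hz)

lemma u_diff (hz : z.im ≠ 0) (x : ℝ) :
    DifferentiableAt ℝ (fun y : ℝ => 1 / ((y:ℂ) - z)) x :=
  (hasDerivAt_u hz x).differentiableAt

lemma deriv_u (hz : z.im ≠ 0) (x : ℝ) :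
    deriv (fun y : ℝ => 1 / ((y:ℂ) - z)) x = -(1 / ((x:ℂ) - z)) ^ 2 :=
  (hasDerivAt_u hz x).deriv

lemma deriv_smooth {f : ℝ → ℂ} (hf : ContDiff ℝ (⊤ : ℕ∞) f) :
    ContDiff ℝ (⊤ : ℕ∞) (deriv f) :=
  (contDiff_infty_iff_deriv.mp hf).2

lemma smooth_diff {f : ℝ → ℂ} (hf : ContDiff ℝ (⊤ : ℕ∞) f) (x : ℝ) :
    DifferentiableAt ℝ f x :=
  (hf.differentiable (by simp)).differentiableAt

lemma r0_smooth (hz : z.im ≠ 0) {f : ℝ → ℂ} (hf : ContDiff ℝ (⊤ : ℕ∞) f) :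
    ContDiff ℝ (⊤ : ℕ∞) (r0Sing z f) :=
  (deriv_smooth hf).add ((u_smooth hz).mul hf)

lemma r0t_smooth (hz : z.im ≠ 0) {f : ℝ → ℂ} (hf : ContDiff ℝ (⊤ : ℕ∞) f) :
    ContDiff ℝ (⊤ : ℕ∞) (r0tSing z f) :=
  ((deriv_smooth hf).neg).add ((u_smooth hz).mul hf)

lemma deriv_r0 (hz : z.im ≠ 0) {f : ℝ → ℂ} (hf : ContDiff ℝ (⊤ : ℕ∞) f) (x : ℝ) :
    deriv (r0Sing z f) x =
      deriv (deriv f) x + (-(1 / ((x:ℂ) - z)) ^ 2 * f x + (1 / ((x:ℂ) - z)) * deriv f x) := by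
  have h1 : DifferentiableAt ℝ (deriv f) x := smooth_diff (deriv_smooth hf) x
  have h2 : DifferentiableAt ℝ f x := smooth_diff hf x
  unfold r0Sing
  rw [deriv_fun_add h1 ((u_diff hz x).fun_mul h2), deriv_fun_mul (u_diff hz x) h2, deriv_u hz]

lemma deriv_r0t (hz : z.im ≠ 0) {f : ℝ → ℂ} (hf : ContDiff ℝ (⊤ : ℕ∞) f) (x : ℝ) :
    deriv (r0tSing z f) x =
      -deriv (deriv f) x + (-(1 / ((x:ℂ) - z)) ^ 2 * f x + (1 / ((x:ℂ) - z)) * deriv f x) := by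
  have h1 : DifferentiableAt ℝ (deriv f) x := smooth_diff (deriv_smooth hf) x
  have h2 : DifferentiableAt ℝ f x := smooth_diff hf x
  unfold r0tSing
  rw [deriv_fun_add h1.fun_neg ((u_diff hz x).fun_mul h2), deriv.fun_neg, deriv_fun_mul (u_diff hz x) h2, deriv_u hz]

/-- `r₀ᵗ r₀ = h`. -/
lemma L1 (hz : z.im ≠ 0) {f : ℝ → ℂ} (hf : ContDiff ℝ (⊤ : ℕ∞) f) :
    r0tSing z (r0Sing z f) = hSing z f := by
  funext x
  have hx := sub_ne hz x
  simp only [r0tSing, hSing, deriv_r0 hz hf x, r0Sing]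
  field_simp
  ring

/-- `r₀ r₀ᵗ = -∂²`. -/
lemma L2 (hz : z.im ≠ 0) {f : ℝ → ℂ} (hf : ContDiff ℝ (⊤ : ℕ∞) f) :
    r0Sing z (r0tSing z f) = fun x => -(deriv (deriv f) x) := by
  funext x
  have hx := sub_ne hz x
  simp only [r0Sing, deriv_r0t hz hf x, r0tSing]
  field_simp
  ring

lemma deriv_neg_fun (f : ℝ → ℂ) : deriv (fun y => -(f y)) = fun x => -(deriv f x) := by
  funext x; exact deriv.neg

lemma r0_neg (f : ℝ → ℂ) : r0Sing z (fun y => -(f y)) = fun x => -(r0Sing z f x) := by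
  funext x
  simp only [r0Sing, deriv.fun_neg]
  ring

lemma r0t_neg (f : ℝ → ℂ) : r0tSing z (fun y => -(f y)) = fun x => -(r0tSing z f x) := by
  funext x
  simp only [r0tSing, deriv.fun_neg]
  ring

end Aux

/-- Factorizations `r₀ᵗ r₀ = h`, `r₀ r₀ᵗ = -∂²`; `e = -r₀ᵗ ∂ r₀` commutes with `h`
and satisfies `-e² = h³`, all as operators on smooth functions. -/
theorem stmt_13 (z : ℂ) (hz : z.im ≠ 0) (f : ℝ → ℂ) (hf : ContDiff ℝ (⊤ : ℕ∞) f) :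
    (∀ x : ℝ, r0tSing z (r0Sing z f) x = hSing z f x) ∧
    (∀ x : ℝ, r0Sing z (r0tSing z f) x = -(deriv (deriv f) x)) ∧
    (∀ x : ℝ, eSing z (hSing z f) x = hSing z (eSing z f) x) ∧
    (∀ x : ℝ, -(eSing z (eSing z f) x) = hSing z (hSing z (hSing z f)) x) := by
  have hf' : ContDiff ℝ (⊤ : ℕ∞) f := hf.of_le (by simp)
  have hr0 : ContDiff ℝ (⊤ : ℕ∞) (r0Sing z f) := r0_smooth hz hf'
  have hDr0 : ContDiff ℝ (⊤ : ℕ∞) (deriv (r0Sing z f)) := deriv_smooth hr0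
  have hD2r0 : ContDiff ℝ (⊤ : ℕ∞) (deriv (deriv (r0Sing z f))) := deriv_smooth hDr0
  have hh : hSing z f = r0tSing z (r0Sing z f) := (L1 hz hf').symm
  have hsm_h : ContDiff ℝ (⊤ : ℕ∞) (hSing z f) := by
    rw [hh]; exact r0t_smooth hz hr0
  have hsm_e : ContDiff ℝ (⊤ : ℕ∞) (eSing z f) := by
    have : eSing z f = fun x => -(r0tSing z (deriv (r0Sing z f)) x) := rfl
    rw [this]
    exact (r0t_smooth hz hDr0).neg
  -- r₀ applied to h f
  have e1 : r0Sing z (hSing z f) = fun x => -(deriv (deriv (r0Sing z f)) x) := by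
    rw [hh]; exact L2 hz hr0
  -- r₀ applied to e f
  have f1 : r0Sing z (eSing z f) = deriv (deriv (deriv (r0Sing z f))) := by
    rw [show eSing z f = fun y => -(r0tSing z (deriv (r0Sing z f)) y) from rfl, r0_neg,
      L2 hz hDr0]
    funext x
    simp
  -- key identities: both sides of commutation equal r₀ᵗ ∂³ r₀ f
  have key1 : eSing z (hSing z f) = r0tSing z (deriv (deriv (deriv (r0Sing z f)))) := by
    funext x
    simp only [eSing, e1, deriv_neg_fun, r0t_neg, neg_neg]
  have key2 : hSing z (eSing z f) = r0tSing z (deriv (deriv (deriv (r0Sing z f)))) := by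
    rw [← L1 hz hsm_e, f1]
  -- -e² = r₀ᵗ ∂⁴ r₀ f
  have key3 : eSing z (eSing z f)
      = fun x => -(r0tSing z (deriv (deriv (deriv (deriv (r0Sing z f))))) x) := by
    funext x
    simp only [eSing, f1]
  -- h² f and h³ f
  have hh2 : hSing z (hSing z f) = fun x => -(r0tSing z (deriv (deriv (r0Sing z f))) x) := by
    rw [← L1 hz hsm_h, e1, r0t_neg]
  have hsm_h2 : ContDiff ℝ (⊤ : ℕ∞) (hSing z (hSing z f)) := by
    rw [hh2]; exact (r0t_smooth hz hD2r0).neg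
  have key4 : hSing z (hSing z (hSing z f))
      = r0tSing z (deriv (deriv (deriv (deriv (r0Sing z f))))) := by
    rw [← L1 hz hsm_h2, hh2, r0_neg, L2 hz hD2r0]
    funext x
    simp
  refine ⟨fun x => congrFun (L1 hz hf') x, fun x => congrFun (L2 hz hf') x,
    fun x => ?_, fun x => ?_⟩
  · rw [key1, key2]
  · rw [key3, key4]
    simp
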